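/- Let u be an articulation vertex of a connected graph G separating components C₁,…,C_k, let v ∈ C_i with v ≠ u, and let s ∈ C_j for j ≠ i. Then the dependency of s on v equals the dependency of u on v computed within the subgraph induced by C_i ∪ {u}: δ_s(v) = δ_u(v), where dependencies are sums of pair dependencies over all targets in V. -/

import Mathlib

open SimpleGraph

/-- Number of shortest `s`–`t` paths in `G`. -/
noncomputable def sigmaP {V : Type} (G : SimpleGraph V) (s t : V) : ℕ :=
  Nat.card {p : G.Walk s t // p.IsPath ∧ p.length = G.dist s t}

/-- Number of shortest `s`–`t` paths in `G` having `v` as an internal vertex. -/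
noncomputable def sigmaThr {V : Type} (G : SimpleGraph V) (s t v : V) : ℕ :=
  Nat.card {p : G.Walk s t // p.IsPath ∧ p.length = G.dist s t ∧
    v ∈ p.support ∧ v ≠ s ∧ v ≠ t}

/-- Betweenness centrality (division by zero gives 0, so only pairs with
`sigmaP G s t > 0` contribute). -/
noncomputable def bc {V : Type} (G : SimpleGraph V) [Fintype V] (v : V) : ℚ :=
  ∑ s, ∑ t, (sigmaThr G s t v : ℚ) / (sigmaP G s t : ℚ)

/-!
Every shortest path from `s` to a target `t ∈ Cᵢ` passes through the articulation vertex `u`, so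
it is a shortest `s`–`u` path followed by a shortest `u`–`t` path, and conversely every such
concatenation is a shortest `s`–`t` path. Moreover `v ∈ Cᵢ` can only lie on the second half.
Hence both `σₛₜ` and `σₛₜ(v)` are `σₛᵤ` times the corresponding count from `u`, and the pair
dependencies agree. For `t ∉ Cᵢ` a shortest path through `v` would have to visit `u` both before
and after `v`, so both pair dependencies vanish.
-/

theorem Nat.card_subtype_snd_eq_mul {α β : Type*} (P : β → Prop) :
    Nat.card {x : α × β // P x.2} = Nat.card α * Nat.card {b // P b} := by
  rw [← Nat.card_prod]
  exact Nat.card_congr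
    { toFun := fun x => (x.1.1, ⟨x.1.2, x.2⟩)
      invFun := fun y => ⟨(y.1, y.2.1), y.2.2⟩ }

namespace SimpleGraph

section Walks

variable {V : Type*} {G : SimpleGraph V}

theorem Walk.append_inj_of_length_eq :
    ∀ {a b c : V} (p₁ q₁ : G.Walk a b) (p₂ q₂ : G.Walk b c),
      p₁.length = q₁.length → p₁.append p₂ = q₁.append q₂ → p₁ = q₁ ∧ p₂ = q₂
  | _, _, _, .nil, .nil, _, _, _, h => ⟨rfl, by simpa using h⟩
  | _, _, _, .nil, .cons _ _, _, _, hl, _ => by simp at hl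
  | _, _, _, .cons _ _, .nil, _, _, hl, _ => by simp at hl
  | _, _, _, .cons _ p₁, .cons _ q₁, p₂, q₂, hl, h => by
      rw [Walk.cons_append, Walk.cons_append] at h
      injection h with _ hv _ hp
      subst hv
      obtain ⟨rfl, rfl⟩ := append_inj_of_length_eq p₁ q₁ p₂ q₂ (by simpa using hl) (eq_of_heq hp)
      exact ⟨rfl, rfl⟩

def Separates (G : SimpleGraph V) (u a b : V) : Prop :=
  ∀ p : G.Walk a b, u ∈ p.support

variable {u a b v : V}

theorem Separates.symm (h : G.Separates u a b) : G.Separates u b a := fun p => by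
  simpa using h p.reverse

theorem separates_self_left : G.Separates u u b := fun p => p.start_mem_support

theorem Separates.ne (h : G.Separates u a b) (hb : b ≠ u) : a ≠ b := by
  rintro rfl
  exact hb (by simpa using h .nil : u = a).symm

theorem separates_of_mem_of_notMem {C : Set V}
    (hC : ∀ x y : {w : V | w ≠ u}, (G.induce {w | w ≠ u}).Reachable x y → ↑x ∈ C → ↑y ∈ C)
    (ha : a ∈ C) (hb : b ∉ C) : G.Separates u a b := by
  intro p
  by_contra hu
  have hp : ∀ x ∈ p.support, x ∈ {w : V | w ≠ u} := fun x hx hxu => hu (hxu ▸ hx)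
  exact hb (hC _ _ (p.induce _ hp).reachable ha)

theorem Separates.dist_eq_add (h : G.Separates u a b) (hr : G.Reachable a b) :
    G.dist a b = G.dist a u + G.dist u b := by
  classical
  obtain ⟨p, hp⟩ := hr.exists_walk_length_eq_dist
  rw [← hp, ← p.take_spec (h p), Walk.length_append,
    length_eq_dist_of_subwalk hp (p.isSubwalk_takeUntil _),
    length_eq_dist_of_subwalk hp (p.isSubwalk_dropUntil _)]

theorem Separates.length_append_eq_dist (h : G.Separates u a b) (hr : G.Reachable a b)
    {p : G.Walk a u} {q : G.Walk u b} (hp : p.length = G.dist a u)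
    (hq : q.length = G.dist u b) : (p.append q).length = G.dist a b := by
  rw [Walk.length_append, hp, hq, h.dist_eq_add hr]

variable [DecidableEq V]

def Separates.geodesicEquiv (h : G.Separates u a b) (hr : G.Reachable a b) :
    {p : G.Walk a b // p.length = G.dist a b} ≃
      {p : G.Walk a u // p.length = G.dist a u} × {q : G.Walk u b // q.length = G.dist u b} where
  toFun p :=
    (⟨p.1.takeUntil u (h p.1), length_eq_dist_of_subwalk p.2 (p.1.isSubwalk_takeUntil _)⟩,
     ⟨p.1.dropUntil u (h p.1), length_eq_dist_of_subwalk p.2 (p.1.isSubwalk_dropUntil _)⟩)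
  invFun q := ⟨q.1.1.append q.2.1, h.length_append_eq_dist hr q.1.2 q.2.2⟩
  left_inv p := Subtype.ext (p.1.take_spec _)
  right_inv := by
    rintro ⟨⟨p, hp⟩, ⟨q, hq⟩⟩
    have hpq := h.length_append_eq_dist hr hp hq
    have hu := h (p.append q)
    obtain ⟨e₁, e₂⟩ := Walk.append_inj_of_length_eq _ p _ q
      ((length_eq_dist_of_subwalk hpq ((p.append q).isSubwalk_takeUntil hu)).trans hp.symm)
      ((p.append q).take_spec hu)
    exact Prod.ext (Subtype.ext e₁) (Subtype.ext e₂)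

theorem Separates.mem_support_dropUntil (h : G.Separates u a v) {p : G.Walk a b}
    (hu : u ∈ p.support) (hv : v ∈ p.support) (hvu : v ≠ u) :
    v ∈ (p.dropUntil u hu).support := by
  rw [← p.take_spec hu, Walk.mem_support_append_iff] at hv
  rcases hv with hv | hv
  · exact absurd (h _) (Walk.notMem_support_takeUntil_support_takeUntil_subset hvu hu hv)
  · exact hv

end Walks

variable {V : Type} {G : SimpleGraph V} {u s t v : V}

theorem sigmaP_eq_card (G : SimpleGraph V) (s t : V) :
    sigmaP G s t = Nat.card {p : G.Walk s t // p.length = G.dist s t} :=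
  Nat.card_congr <| Equiv.subtypeEquivRight fun p =>
    ⟨And.right, fun hp => ⟨p.isPath_of_length_eq_dist hp, hp⟩⟩

theorem sigmaThr_eq_card (G : SimpleGraph V) (s t v : V) :
    sigmaThr G s t v = Nat.card {p : {p : G.Walk s t // p.length = G.dist s t} //
      v ∈ p.1.support ∧ v ≠ s ∧ v ≠ t} :=
  Nat.card_congr <| (Equiv.subtypeEquivRight fun p =>
    ⟨And.right, fun hp => ⟨p.isPath_of_length_eq_dist hp.1, hp⟩⟩).trans
    (Equiv.subtypeSubtypeEquivSubtypeInter _ _).symm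

theorem sigmaP_pos [Finite V] (hr : G.Reachable s t) : 0 < sigmaP G s t := by
  classical
  have := Fintype.ofFinite V
  obtain ⟨p, hp⟩ := hr.exists_walk_length_eq_dist
  have : Nonempty {p : G.Walk s t // p.length = G.dist s t} := ⟨⟨p, hp⟩⟩
  rw [sigmaP_eq_card]
  exact Nat.card_pos

theorem Separates.sigmaP_eq_mul (h : G.Separates u s t) (hr : G.Reachable s t) :
    sigmaP G s t = sigmaP G s u * sigmaP G u t := by
  classical
  rw [sigmaP_eq_card, sigmaP_eq_card, sigmaP_eq_card, ← Nat.card_prod]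
  exact Nat.card_congr (h.geodesicEquiv hr)

theorem Separates.sigmaThr_eq_mul (h : G.Separates u s t) (hr : G.Reachable s t)
    (hsv : G.Separates u s v) (hvu : v ≠ u) :
    sigmaThr G s t v = sigmaP G s u * sigmaThr G u t v := by
  classical
  rw [sigmaThr_eq_card, sigmaThr_eq_card, sigmaP_eq_card,
    ← Nat.card_subtype_snd_eq_mul (fun q : {q : G.Walk u t // q.length = G.dist u t} =>
      v ∈ q.1.support ∧ v ≠ u ∧ v ≠ t)]
  refine Nat.card_congr ((h.geodesicEquiv hr).subtypeEquiv fun p => ?_)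
  have hvs : v ≠ s := (hsv.ne hvu).symm
  exact ⟨fun ⟨hv, _, hvt⟩ => ⟨hsv.mem_support_dropUntil _ hv hvu, hvu, hvt⟩,
    fun ⟨hv, _, hvt⟩ => ⟨p.1.support_dropUntil_subset_support _ hv, hvs, hvt⟩⟩

theorem sigmaThr_eq_zero_of_separates (hsv : G.Separates u s v) (hvt : G.Separates u v t)
    (hvu : v ≠ u) : sigmaThr G s t v = 0 := by
  classical
  rw [sigmaThr, Nat.card_eq_zero]
  refine .inl ⟨fun ⟨p, hp, _, hv, _⟩ => ?_⟩
  rw [← p.take_spec hv] at hp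
  exact hp.ne_of_mem_support_of_append hvu.symm (hsv _) (hvt _) rfl

theorem Separates.pairDependency_eq [Finite V] (h : G.Separates u s t) (hr : G.Reachable s t)
    (hsv : G.Separates u s v) (hvu : v ≠ u) :
    (sigmaThr G s t v : ℚ) / sigmaP G s t = (sigmaThr G u t v : ℚ) / sigmaP G u t := by
  classical
  obtain ⟨p⟩ := hr
  have hsu : 0 < sigmaP G s u := sigmaP_pos (p.takeUntil u (h p)).reachable
  rw [h.sigmaP_eq_mul ⟨p⟩, h.sigmaThr_eq_mul ⟨p⟩ hsv hvu]
  push_cast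
  exact mul_div_mul_left _ _ (by exact_mod_cast hsu.ne')

end SimpleGraph

theorem dependency_across_articulation_general {V : Type} [Fintype V] (G : SimpleGraph V)
    (hconn : G.Connected) (u : V) (Ci Cj : Set V)
    (hdisj : Disjoint Ci Cj) (huCi : u ∉ Ci)
    (hclosedi : ∀ (a b : ↥{w : V | w ≠ u}),
      (G.induce {w : V | w ≠ u}).Reachable a b → ↑a ∈ Ci → ↑b ∈ Ci)
    (v : V) (hv : v ∈ Ci) (s : V) (hs : s ∈ Cj) :
    (∑ t, (sigmaThr G s t v : ℚ) / (sigmaP G s t : ℚ))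
      = ∑ t, (sigmaThr G u t v : ℚ) / (sigmaP G u t : ℚ) := by
  have hsCi : s ∉ Ci := hdisj.notMem_of_mem_right hs
  have hvu : v ≠ u := ne_of_mem_of_not_mem hv huCi
  have hsv : G.Separates u s v := (separates_of_mem_of_notMem hclosedi hv hsCi).symm
  refine Finset.sum_congr rfl fun t _ => ?_
  by_cases ht : t ∈ Ci
  · exact (separates_of_mem_of_notMem hclosedi ht hsCi).symm.pairDependency_eq (hconn s t) hsv hvu
  · have hvt : G.Separates u v t := separates_of_mem_of_notMem hclosedi hv ht
    rw [sigmaThr_eq_zero_of_separates hsv hvt hvu,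
      sigmaThr_eq_zero_of_separates separates_self_left hvt hvu]
    simp

theorem dependency_across_articulation {V : Type} [Fintype V] (G : SimpleGraph V)
    (hconn : G.Connected) (u : V) (Ci Cj : Set V)
    (hdisj : Disjoint Ci Cj) (huCi : u ∉ Ci) (huCj : u ∉ Cj)
    (hclosedi : ∀ (a b : ↥{w : V | w ≠ u}),
      (G.induce {w : V | w ≠ u}).Reachable a b → ↑a ∈ Ci → ↑b ∈ Ci)
    (hclosedj : ∀ (a b : ↥{w : V | w ≠ u}),
      (G.induce {w : V | w ≠ u}).Reachable a b → ↑a ∈ Cj → ↑b ∈ Cj)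
    (v : V) (hv : v ∈ Ci) (s : V) (hs : s ∈ Cj) :
    (∑ t, (sigmaThr G s t v : ℚ) / (sigmaP G s t : ℚ))
      = ∑ t, (sigmaThr G u t v : ℚ) / (sigmaP G u t : ℚ) :=
  dependency_across_articulation_general G hconn u Ci Cj hdisj huCi hclosedi v hv s hs
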